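/- Soundness of bidirectional typechecking: (1) if Γ ⊢ v ⇐ τ⁺ or Γ ⊢ v ⇒ τ⁺ then there exists a value v' with Γ ⊢ v' : τ⁺ and |v'| = v; (2) if Γ ⊢ e ⇐ σ⁻ or Γ ⊢ e ⇒ σ⁻ then there exists a computation e' with Γ ⊢ e' : σ⁻ and |e'| = e. -/

import Mathlib

/-!
The witness is the erasure of the term itself. Erasing the annotations of a bidirectionally
typed term yields a declaratively typed one: the two annotation rules become trivial, every
other checking or synthesis rule is an instance of the corresponding declarative rule, and the
switch from synthesis to checking is declarative subsumption. Erasure is idempotent, so the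
erased term agrees with the original one up to annotations.
-/

namespace CBPV

abbrev Label := String
abbrev Var := String

-- Positive types (values); `name` refers to an equirecursively defined type name.
mutual
inductive PosTp : Type where
  | name : String → PosTp
  | str  : PosStr → PosTp

/-- Structural positive types. -/
inductive PosStr : Type where
  | tensor : PosTp → PosTp → PosStr
  | one    : PosStr
  | plus   : List (Label × PosTp) → PosStr
  | down   : NegTp → PosStr

/-- Negative types (computations). -/
inductive NegTp : Type where
  | name : String → NegTp
  | str  : NegStr → NegTp

/-- Structural negative types. -/
inductive NegStr : Type where
  | arrow   : PosTp → NegTp → NegStr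
  | withRec : List (Label × NegTp) → NegStr
  | up      : PosTp → NegStr
end

-- Values and computations, including the type annotations `(v : τ⁺)` and
-- `(e : σ⁻)`, which exist purely for bidirectional typechecking and are
-- erased before evaluation.
mutual
inductive Val : Type where
  | var   : Var → Val
  | pair  : Val → Val → Val
  | unit  : Val
  | inj   : Label → Val → Val
  | thunk : Comp → Val
  | anno  : Val → PosTp → Val

inductive Comp : Type where
  | lam       : Var → Comp → Comp
  | app       : Comp → Val → Comp
  | record    : List (Label × Comp) → Comp
  | proj      : Comp → Label → Comp
  | ret       : Val → Comp
  | letret    : Var → Comp → Comp → Comp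
  | name      : String → Comp
  | matchPair : Val → Var → Var → Comp → Comp
  | matchUnit : Val → Comp → Comp
  | matchSum  : Val → List (Label × Var × Comp) → Comp
  | force     : Val → Comp
  | anno      : Comp → NegTp → Comp
end

/-- A global signature: equirecursive (contractive) type definitions and
recursive expression definitions `f : σ⁻ = e`. -/
structure Signature : Type where
  pos  : String → PosStr
  neg  : String → NegStr
  defs : String → NegTp × Comp

mutual
/-- Erasure of type annotations from values. -/
def eraseV : Val → Val
  | .var y => .var y
  | .pair v₁ v₂ => .pair (eraseV v₁) (eraseV v₂)
  | .unit => .unit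
  | .inj j v => .inj j (eraseV v)
  | .thunk e => .thunk (eraseC e)
  | .anno v _ => eraseV v

/-- Erasure of type annotations from computations. -/
def eraseC : Comp → Comp
  | .lam y e => .lam y (eraseC e)
  | .app e v => .app (eraseC e) (eraseV v)
  | .record L => .record (eraseRec L)
  | .proj e j => .proj (eraseC e) j
  | .ret v => .ret (eraseV v)
  | .letret y e₁ e₂ => .letret y (eraseC e₁) (eraseC e₂)
  | .name f => .name f
  | .matchPair v y z e => .matchPair (eraseV v) y z (eraseC e)
  | .matchUnit v e => .matchUnit (eraseV v) (eraseC e)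
  | .matchSum v B => .matchSum (eraseV v) (eraseBr B)
  | .force v => .force (eraseV v)
  | .anno e _ => eraseC e

def eraseRec : List (Label × Comp) → List (Label × Comp)
  | [] => []
  | (l, e) :: rest => (l, eraseC e) :: eraseRec rest

def eraseBr : List (Label × Var × Comp) → List (Label × Var × Comp)
  | [] => []
  | (l, y, e) :: rest => (l, y, eraseC e) :: eraseBr rest
end

/-- Unfold a positive type to a structural type using the signature
(equirecursive type definitions). -/
def unfP (Sg : Signature) : PosTp → PosStr
  | .name t => Sg.pos t
  | .str τ => τ

/-- Unfold a negative type to a structural type using the signature. -/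
def unfN (Sg : Signature) : NegTp → NegStr
  | .name s => Sg.neg s
  | .str σ => σ

end CBPV

namespace CBPV

/-- One unfolding of the rules for emptiness of general positive types
(type names are unfolded equirecursively through the signature). -/
def GEmptyUnf (Sg : Signature) (S : PosTp → Prop) (τ : PosTp) : Prop :=
  (∃ L, unfP Sg τ = .plus L ∧ ∀ p ∈ L, S (Prod.snd p)) ∨
  (∃ τ₁ τ₂, unfP Sg τ = .tensor τ₁ τ₂ ∧ (S τ₁ ∨ S τ₂))

/-- `τ⁺ empty`, for general positive types (greatest fixed point). -/
def GEmpty (Sg : Signature) (τ : PosTp) : Prop :=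
  ∃ S : PosTp → Prop, (∀ υ, S υ → GEmptyUnf Sg S υ) ∧ S τ

/-- `σ⁻ full`, for general negative types. -/
def GFull (Sg : Signature) (σ : NegTp) : Prop :=
  (∃ τ₁ σ₂, unfN Sg σ = .arrow τ₁ σ₂ ∧ GEmpty Sg τ₁) ∨
  unfN Sg σ = .withRec []

/-- One unfolding of the rules for positive subtyping of general types. -/
def GPosUnf (Sg : Signature) (P : PosTp → PosTp → Prop)
    (N : NegTp → NegTp → Prop) (τ υ : PosTp) : Prop :=
  (∃ τ₁ τ₂ υ₁ υ₂, unfP Sg τ = .tensor τ₁ τ₂ ∧ unfP Sg υ = .tensor υ₁ υ₂ ∧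
     P τ₁ υ₁ ∧ P τ₂ υ₂) ∨
  (unfP Sg τ = .one ∧ unfP Sg υ = .one) ∨
  (∃ L K, unfP Sg τ = .plus L ∧ unfP Sg υ = .plus K ∧
     ∀ p ∈ L, GEmpty Sg (Prod.snd p) ∨
       ∃ υj, K.lookup (Prod.fst p) = some υj ∧ P (Prod.snd p) υj) ∨
  (∃ σ ρ, unfP Sg τ = .down σ ∧ unfP Sg υ = .down ρ ∧ N σ ρ) ∨
  GEmpty Sg τ

/-- One unfolding of the rules for negative subtyping of general types. -/
def GNegUnf (Sg : Signature) (P : PosTp → PosTp → Prop)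
    (N : NegTp → NegTp → Prop) (σ ρ : NegTp) : Prop :=
  (∃ τ₁ σ₂ υ₁ ρ₂, unfN Sg σ = .arrow τ₁ σ₂ ∧ unfN Sg ρ = .arrow υ₁ ρ₂ ∧
     P υ₁ τ₁ ∧ N σ₂ ρ₂) ∨
  (∃ τ υ, unfN Sg σ = .up τ ∧ unfN Sg ρ = .up υ ∧ P τ υ) ∨
  (∃ L K, unfN Sg σ = .withRec L ∧ unfN Sg ρ = .withRec K ∧
     ∀ p ∈ K, ∃ σj, L.lookup (Prod.fst p) = some σj ∧ N σj (Prod.snd p)) ∨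
  (∃ τ, unfN Sg σ = .up τ ∧ GEmpty Sg τ) ∨
  GFull Sg ρ

/-- `τ⁺ ≤ υ⁺`: syntactic subtyping of general positive types
(greatest fixed point / circular derivations). -/
def GSubP (Sg : Signature) (τ υ : PosTp) : Prop :=
  ∃ (P : PosTp → PosTp → Prop) (N : NegTp → NegTp → Prop),
    (∀ a b, P a b → GPosUnf Sg P N a b) ∧
    (∀ a b, N a b → GNegUnf Sg P N a b) ∧ P τ υ

/-- `σ⁻ ≤ ρ⁻`: syntactic subtyping of general negative types. -/
def GSubN (Sg : Signature) (σ ρ : NegTp) : Prop :=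
  ∃ (P : PosTp → PosTp → Prop) (N : NegTp → NegTp → Prop),
    (∀ a b, P a b → GPosUnf Sg P N a b) ∧
    (∀ a b, N a b → GNegUnf Sg P N a b) ∧ N σ ρ

end CBPV

namespace CBPV

/-- Typing contexts: variables with positive types. -/
abbrev Ctx := List (Var × PosTp)

mutual
/-- Declarative typing of values, `Γ ⊢ v : τ⁺`. -/
inductive VTyp (Sg : Signature) : Ctx → Val → PosTp → Prop where
  | var : Γ.lookup x = some τ → VTyp Sg Γ (.var x) τ
  | pair : VTyp Sg Γ v₁ τ₁ → VTyp Sg Γ v₂ τ₂ →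
      VTyp Sg Γ (.pair v₁ v₂) (.str (.tensor τ₁ τ₂))
  | unit : VTyp Sg Γ .unit (.str .one)
  | inj : L.lookup j = some τj → VTyp Sg Γ v τj →
      VTyp Sg Γ (.inj j v) (.str (.plus L))
  | thunk : ETyp Sg Γ e σ → VTyp Sg Γ (.thunk e) (.str (.down σ))
  | sub : VTyp Sg Γ v τ → GSubP Sg τ τ' → VTyp Sg Γ v τ'

/-- Declarative typing of computations, `Γ ⊢ e : σ⁻`. -/
inductive ETyp (Sg : Signature) : Ctx → Comp → NegTp → Prop where
  | lam : ETyp Sg ((x, τ) :: Γ) e σ → ETyp Sg Γ (.lam x e) (.str (.arrow τ σ))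
  | app : ETyp Sg Γ e (.str (.arrow τ σ)) → VTyp Sg Γ v τ →
      ETyp Sg Γ (.app e v) σ
  | record :
      (Es.map Prod.fst).Nodup →
      (∀ j : Label, (Ks.lookup j).isSome ↔ (Es.lookup j).isSome) →
      (∀ (j : Label) (ej : Comp) (σj : NegTp),
        Es.lookup j = some ej → Ks.lookup j = some σj → ETyp Sg Γ ej σj) →
      ETyp Sg Γ (.record Es) (.str (.withRec Ks))
  | proj : ETyp Sg Γ e (.str (.withRec Ks)) → Ks.lookup j = some σj →
      ETyp Sg Γ (.proj e j) σj
  | ret : VTyp Sg Γ v τ → ETyp Sg Γ (.ret v) (.str (.up τ))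
  | letret : ETyp Sg Γ e₁ (.str (.up τ)) → ETyp Sg ((x, τ) :: Γ) e₂ σ →
      ETyp Sg Γ (.letret x e₁ e₂) σ
  | name : Sg.defs f = (σ, e) → ETyp Sg Γ (.name f) σ
  | matchPair : VTyp Sg Γ v (.str (.tensor τ₁ τ₂)) →
      ETyp Sg ((y, τ₂) :: (x, τ₁) :: Γ) e σ →
      ETyp Sg Γ (.matchPair v x y e) σ
  | matchUnit : VTyp Sg Γ v (.str .one) → ETyp Sg Γ e σ →
      ETyp Sg Γ (.matchUnit v e) σ
  | matchSum : VTyp Sg Γ v (.str (.plus L)) →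
      (Bs.map Prod.fst).Nodup →
      (∀ ℓ : Label, (L.lookup ℓ).isSome ↔ (Bs.lookup ℓ).isSome) →
      (∀ (ℓ : Label) (τℓ : PosTp) (x : Var) (eℓ : Comp),
        L.lookup ℓ = some τℓ → Bs.lookup ℓ = some (x, eℓ) →
        ETyp Sg ((x, τℓ) :: Γ) eℓ σ) →
      ETyp Sg Γ (.matchSum v Bs) σ
  | force : VTyp Sg Γ v (.str (.down σ)) → ETyp Sg Γ (.force v) σ
  | sub : ETyp Sg Γ e σ → GSubN Sg σ σ' → ETyp Sg Γ e σ'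
end

end CBPV

namespace CBPV

mutual
/-- Bidirectional checking of values, `Γ ⊢ v ⇐ τ⁺`. -/
inductive VChk (Sg : Signature) : Ctx → Val → PosTp → Prop where
  | pair : VChk Sg Γ v₁ τ₁ → VChk Sg Γ v₂ τ₂ →
      VChk Sg Γ (.pair v₁ v₂) (.str (.tensor τ₁ τ₂))
  | unit : VChk Sg Γ .unit (.str .one)
  | inj : L.lookup j = some τj → VChk Sg Γ v τj →
      VChk Sg Γ (.inj j v) (.str (.plus L))
  | thunk : EChk Sg Γ e σ → VChk Sg Γ (.thunk e) (.str (.down σ))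
  | sub : VSyn Sg Γ v τ → GSubP Sg τ τ' → VChk Sg Γ v τ'

/-- Bidirectional synthesis for values, `Γ ⊢ v ⇒ τ⁺`. -/
inductive VSyn (Sg : Signature) : Ctx → Val → PosTp → Prop where
  | var : Γ.lookup x = some τ → VSyn Sg Γ (.var x) τ
  | anno : VChk Sg Γ v τ → VSyn Sg Γ (.anno v τ) τ

/-- Bidirectional checking of computations, `Γ ⊢ e ⇐ σ⁻`. -/
inductive EChk (Sg : Signature) : Ctx → Comp → NegTp → Prop where
  | lam : EChk Sg ((x, τ) :: Γ) e σ → EChk Sg Γ (.lam x e) (.str (.arrow τ σ))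
  | record :
      (Es.map Prod.fst).Nodup →
      (∀ j : Label, (Ks.lookup j).isSome ↔ (Es.lookup j).isSome) →
      (∀ (j : Label) (ej : Comp) (σj : NegTp),
        Es.lookup j = some ej → Ks.lookup j = some σj → EChk Sg Γ ej σj) →
      EChk Sg Γ (.record Es) (.str (.withRec Ks))
  | ret : VChk Sg Γ v τ → EChk Sg Γ (.ret v) (.str (.up τ))
  | letret : ESyn Sg Γ e₁ (.str (.up τ)) → EChk Sg ((x, τ) :: Γ) e₂ σ →
      EChk Sg Γ (.letret x e₁ e₂) σ
  | matchPair : VSyn Sg Γ v (.str (.tensor τ₁ τ₂)) →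
      EChk Sg ((y, τ₂) :: (x, τ₁) :: Γ) e σ →
      EChk Sg Γ (.matchPair v x y e) σ
  | matchUnit : VSyn Sg Γ v (.str .one) → EChk Sg Γ e σ →
      EChk Sg Γ (.matchUnit v e) σ
  | matchSum : VSyn Sg Γ v (.str (.plus L)) →
      (Bs.map Prod.fst).Nodup →
      (∀ ℓ : Label, (L.lookup ℓ).isSome ↔ (Bs.lookup ℓ).isSome) →
      (∀ (ℓ : Label) (τℓ : PosTp) (x : Var) (eℓ : Comp),
        L.lookup ℓ = some τℓ → Bs.lookup ℓ = some (x, eℓ) →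
        EChk Sg ((x, τℓ) :: Γ) eℓ σ) →
      EChk Sg Γ (.matchSum v Bs) σ
  | sub : ESyn Sg Γ e σ → GSubN Sg σ σ' → EChk Sg Γ e σ'

/-- Bidirectional synthesis for computations, `Γ ⊢ e ⇒ σ⁻`. -/
inductive ESyn (Sg : Signature) : Ctx → Comp → NegTp → Prop where
  | app : ESyn Sg Γ e (.str (.arrow τ σ)) → VChk Sg Γ v τ →
      ESyn Sg Γ (.app e v) σ
  | proj : ESyn Sg Γ e (.str (.withRec Ks)) → Ks.lookup j = some σj →
      ESyn Sg Γ (.proj e j) σj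
  | force : VSyn Sg Γ v (.str (.down σ)) → ESyn Sg Γ (.force v) σ
  | name : Sg.defs f = (σ, e) → ESyn Sg Γ (.name f) σ
  | anno : EChk Sg Γ e σ → ESyn Sg Γ (.anno e σ) σ
end

end CBPV

theorem List.lookup_map_snd {α β γ : Type*} [BEq α] (f : β → γ) (L : List (α × β)) (a : α) :
    (L.map fun p => (p.1, f p.2)).lookup a = (L.lookup a).map f := by
  induction L with
  | nil => rfl
  | cons p L ih => cases h : a == p.1 <;> simp_all [List.lookup]

namespace CBPV

theorem eraseRec_eq_map (L : List (Label × Comp)) :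
    eraseRec L = L.map fun p => (p.1, eraseC p.2) := by
  induction L with
  | nil => rfl
  | cons p L ih => simp [eraseRec, ih]

theorem eraseBr_eq_map (B : List (Label × Var × Comp)) :
    eraseBr B = B.map fun p => (p.1, p.2.1, eraseC p.2.2) := by
  induction B with
  | nil => rfl
  | cons p B ih => simp [eraseBr, ih]

mutual
theorem eraseV_eraseV : ∀ v, eraseV (eraseV v) = eraseV v
  | .var _ | .unit => rfl
  | .pair v₁ v₂ => by simp [eraseV, eraseV_eraseV v₁, eraseV_eraseV v₂]
  | .inj _ v | .anno v _ => by simp [eraseV, eraseV_eraseV v]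
  | .thunk e => by simp [eraseV, eraseC_eraseC e]

theorem eraseC_eraseC : ∀ e, eraseC (eraseC e) = eraseC e
  | .name _ => rfl
  | .lam _ e | .proj e _ | .anno e _ => by simp [eraseC, eraseC_eraseC e]
  | .ret v | .force v => by simp [eraseC, eraseV_eraseV v]
  | .app e v | .matchPair v _ _ e | .matchUnit v e => by
    simp [eraseC, eraseC_eraseC e, eraseV_eraseV v]
  | .letret _ e₁ e₂ => by simp [eraseC, eraseC_eraseC e₁, eraseC_eraseC e₂]
  | .record L => by simp [eraseC, eraseRec_eraseRec L]
  | .matchSum v B => by simp [eraseC, eraseV_eraseV v, eraseBr_eraseBr B]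

theorem eraseRec_eraseRec : ∀ L, eraseRec (eraseRec L) = eraseRec L
  | [] => rfl
  | (_, e) :: L => by simp [eraseRec, eraseC_eraseC e, eraseRec_eraseRec L]

theorem eraseBr_eraseBr : ∀ B, eraseBr (eraseBr B) = eraseBr B
  | [] => rfl
  | (_, _, e) :: B => by simp [eraseBr, eraseC_eraseC e, eraseBr_eraseBr B]
end

variable {Sg : Signature}

mutual
theorem VChk.vTyp_eraseV {Γ : Ctx} {v : Val} {τ : PosTp} :
    VChk Sg Γ v τ → VTyp Sg Γ (eraseV v) τ
  | .pair h₁ h₂ => .pair h₁.vTyp_eraseV h₂.vTyp_eraseV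
  | .unit => .unit
  | .inj hj h => .inj hj h.vTyp_eraseV
  | .thunk h => .thunk h.eTyp_eraseC
  | .sub h hsub => .sub h.vTyp_eraseV hsub

theorem VSyn.vTyp_eraseV {Γ : Ctx} {v : Val} {τ : PosTp} :
    VSyn Sg Γ v τ → VTyp Sg Γ (eraseV v) τ
  | .var hx => .var hx
  | .anno h => h.vTyp_eraseV

theorem EChk.eTyp_eraseC {Γ : Ctx} {e : Comp} {σ : NegTp} :
    EChk Sg Γ e σ → ETyp Sg Γ (eraseC e) σ
  | .lam h => .lam h.eTyp_eraseC
  | .record hnd hdom h => by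
    simp only [eraseC, eraseRec_eq_map]
    refine .record (by simpa [Function.comp_def] using hnd)
      (by simpa [List.lookup_map_snd] using hdom) fun j _ σj hej hσj => ?_
    obtain ⟨e, he, rfl⟩ := Option.map_eq_some_iff.mp ((List.lookup_map_snd ..).symm.trans hej)
    exact (h j e σj he hσj).eTyp_eraseC
  | .ret h => .ret h.vTyp_eraseV
  | .letret h₁ h₂ => .letret h₁.eTyp_eraseC h₂.eTyp_eraseC
  | .matchPair hv h => .matchPair hv.vTyp_eraseV h.eTyp_eraseC
  | .matchUnit hv h => .matchUnit hv.vTyp_eraseV h.eTyp_eraseC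
  | .matchSum hv hnd hdom h => by
    simp only [eraseC, eraseBr_eq_map]
    refine .matchSum hv.vTyp_eraseV (by simpa [Function.comp_def] using hnd)
      (by simpa [List.lookup_map_snd] using hdom) fun ℓ τℓ _ _ hτ heℓ => ?_
    obtain ⟨⟨x, e⟩, he, hxe⟩ := Option.map_eq_some_iff.mp
      ((List.lookup_map_snd (fun q : Var × Comp => (q.1, eraseC q.2)) ..).symm.trans heℓ)
    cases hxe
    exact (h ℓ τℓ x e hτ he).eTyp_eraseC
  | .sub h hsub => .sub h.eTyp_eraseC hsub

theorem ESyn.eTyp_eraseC {Γ : Ctx} {e : Comp} {σ : NegTp} :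
    ESyn Sg Γ e σ → ETyp Sg Γ (eraseC e) σ
  | .app h hv => .app h.eTyp_eraseC hv.vTyp_eraseV
  | .proj h hj => .proj h.eTyp_eraseC hj
  | .force hv => .force hv.vTyp_eraseV
  | .name hf => .name hf
  | .anno h => h.eTyp_eraseC
end

/-- Soundness of bidirectional typechecking:
(1) if `Γ ⊢ v ⇐ τ⁺` or `Γ ⊢ v ⇒ τ⁺` then there exists a value `v'` with
    `Γ ⊢ v' : τ⁺` and `|v'| = v` (the same value up to extra annotations,
    i.e. equal after erasure);
(2) if `Γ ⊢ e ⇐ σ⁻` or `Γ ⊢ e ⇒ σ⁻` then there exists a computation `e'`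
    with `Γ ⊢ e' : σ⁻` and `|e'| = e`. -/
theorem bidirectional_sound (Sg : Signature) :
    (∀ (Γ : Ctx) (v : Val) (τ : PosTp), VChk Sg Γ v τ ∨ VSyn Sg Γ v τ →
      ∃ v' : Val, VTyp Sg Γ v' τ ∧ eraseV v' = eraseV v) ∧
    (∀ (Γ : Ctx) (e : Comp) (σ : NegTp), EChk Sg Γ e σ ∨ ESyn Sg Γ e σ →
      ∃ e' : Comp, ETyp Sg Γ e' σ ∧ eraseC e' = eraseC e) :=
  ⟨fun _ v _ h => ⟨eraseV v, h.elim VChk.vTyp_eraseV VSyn.vTyp_eraseV, eraseV_eraseV v⟩,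
    fun _ e _ h => ⟨eraseC e, h.elim EChk.eTyp_eraseC ESyn.eTyp_eraseC, eraseC_eraseC e⟩⟩

end CBPV
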